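/- arXiv:1907.11560 — 2 statements merged into one kernel-verified Lean document; each statement's English description precedes it below -/
import Mathlib

section
/- If a finite set S ⊆ ℕ is up-admissible for v, then S is down-admissible for w := v(S) and w[S] = v. -/
namespace SL2Tilt

/-- The `i`-th `p`-adic digit of `v`. -/
def dig (p v i : ℕ) : ℕ := v / p ^ i % p

/-- A stretch: a nonempty finite set of consecutive integers. -/
def IsStretch (S : Finset ℕ) : Prop :=
  S.Nonempty ∧ ∀ a ∈ S, ∀ b ∈ S, ∀ c, a ≤ c → c ≤ b → c ∈ S

/-- `S` is down-admissible for `v` (with respect to the prime `p`):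
(d1) the digit of `v` at the minimum of each maximal stretch of `S` is nonzero, and
(d2) if `s ∈ S` and the `(s+1)`-st digit is `0`, then `s + 1 ∈ S`. -/
def DownAdm (p v : ℕ) (S : Finset ℕ) : Prop :=
  (∀ s ∈ S, (s = 0 ∨ s - 1 ∉ S) → dig p v s ≠ 0) ∧
  (∀ s ∈ S, dig p v (s + 1) = 0 → s + 1 ∈ S)

/-- `S` is up-admissible for `v` (with respect to the prime `p`):
(u1) the digit of `v` at the minimum of each maximal stretch of `S` is nonzero, and
(u2) if `s ∈ S` and the `(s+1)`-st digit is `p - 1`, then `s + 1 ∈ S`. -/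
def UpAdm (p v : ℕ) (S : Finset ℕ) : Prop :=
  (∀ s ∈ S, (s = 0 ∨ s - 1 ∉ S) → dig p v s ≠ 0) ∧
  (∀ s ∈ S, dig p v (s + 1) = p - 1 → s + 1 ∈ S)

/-- `v[S] = ∑ᵢ εᵢ aᵢ pⁱ` (εᵢ = -1 for i ∈ S, else 1), as an integer.
All nonzero digits of `v` have index `< v`, so the range `Finset.range v ∪ S` suffices. -/
def vdown (p v : ℕ) (S : Finset ℕ) : ℤ :=
  ∑ i ∈ Finset.range v ∪ S,
    (if i ∈ S then (-1 : ℤ) else 1) * (dig p v i : ℤ) * (p : ℤ) ^ i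

/-- `v(S) = ∑ᵢ aᵢ' pⁱ` where `aᵢ' = -aᵢ` if `i ∈ S`, `aᵢ' = aᵢ + 2` if `i ∉ S` and
`i - 1 ∈ S`, and `aᵢ' = aᵢ` otherwise; as an integer. -/
def vup (p v : ℕ) (S : Finset ℕ) : ℤ :=
  ∑ i ∈ Finset.range v ∪ S ∪ S.image (· + 1),
    (if i ∈ S then -(dig p v i : ℤ)
      else if i - 1 ∈ S then (dig p v i : ℤ) + 2
      else (dig p v i : ℤ)) * (p : ℤ) ^ i

/-- `v[S]` as a natural number. -/
def vdownN (p v : ℕ) (S : Finset ℕ) : ℕ := (vdown p v S).toNat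

/-- `v(S)` as a natural number. -/
def vupN (p v : ℕ) (S : Finset ℕ) : ℕ := (vup p v S).toNat

/-- `fancest' p v s` is `v` with the `p`-adic digits in positions `< s` set to zero.
This is the ancestor `fancest_{s-1}(v)` of the paper: the youngest ancestor of `v`
whose `(s-1)`-st digit is zero (with `fancest' p v 0 = fancest_{-1}(v) = v`). -/
def fancest' (p v s : ℕ) : ℕ := p ^ s * (v / p ^ s)

/-- The scalar `λ_{v,S} = ∏_{s ∈ S} (-1)^(a_s p^s) · fancest_{s-1}(v)[S]± / fancest_s(v)[S]±`. -/
def lam (p v : ℕ) (S : Finset ℕ) : ℚ :=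
  ∏ s ∈ S,
    (-1 : ℚ) ^ (dig p v s * p ^ s) *
      ((vdown p (fancest' p v s) S : ℚ) / (vdown p (fancest' p v (s + 1)) S : ℚ))

/-- The generation of `v` : the number of (matrilineal) ancestors of `v`, i.e. the
number of nonzero `p`-adic digits of `v` minus one. -/
def gen (p v : ℕ) : ℕ :=
  ((Finset.range v).filter (fun i => dig p v i ≠ 0)).card - 1

/-- A minimal down-admissible stretch for `v`: a down-admissible stretch, no proper
nonempty subset of which is down-admissible for `v`. -/
def MinDownStretch (p v : ℕ) (S : Finset ℕ) : Prop :=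
  DownAdm p v S ∧ IsStretch S ∧ ∀ T ⊂ S, T.Nonempty → ¬ DownAdm p v T

/-- A minimal up-admissible stretch for `v`. -/
def MinUpStretch (p v : ℕ) (S : Finset ℕ) : Prop :=
  UpAdm p v S ∧ IsStretch S ∧ ∀ T ⊂ S, T.Nonempty → ¬ UpAdm p v T

/-- `A` and `B` are distant: `d(A,B) > 1`, i.e. `|a - b| > 1` for all `a ∈ A`, `b ∈ B`. -/
def Distant (A B : Finset ℕ) : Prop :=
  ∀ a ∈ A, ∀ b ∈ B, a + 1 < b ∨ b + 1 < a

lemma lt_pow_of_le {p v i : ℕ} (hp : 2 ≤ p) (h : v ≤ i) : v < p ^ i :=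
  lt_of_lt_of_le (Nat.lt_of_le_of_lt h (Nat.lt_two_pow_self (n := i))) (Nat.pow_le_pow_left hp i)

lemma dig_lt {p : ℕ} (hp : 2 ≤ p) (v i : ℕ) : dig p v i < p :=
  Nat.mod_lt _ (by omega)

lemma dig_eq_zero {p v i : ℕ} (h : v < p ^ i) : dig p v i = 0 := by
  unfold dig
  rw [Nat.div_eq_of_lt h, Nat.zero_mod]

lemma dig_succ (p v i : ℕ) : dig p v (i + 1) = dig p (v / p) i := by
  unfold dig
  rw [pow_succ, Nat.div_div_eq_div_mul, mul_comm (p ^ i) p, ← Nat.div_div_eq_div_mul]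

lemma self_eq_sum_dig {p : ℕ} (hp : 2 ≤ p) :
    ∀ (N v : ℕ), v < p ^ N → v = ∑ i ∈ Finset.range N, dig p v i * p ^ i := by
  intro N
  induction N with
  | zero => intro v hv; simpa using Nat.lt_one_iff.mp (by simpa using hv)
  | succ n ih =>
    intro v hv
    rw [Finset.sum_range_succ']
    have h0 : dig p v 0 = v % p := by unfold dig; simp
    have hdiv : v / p < p ^ n := by
      rw [Nat.div_lt_iff_lt_mul (by omega : 0 < p)]
      calc v < p ^ (n + 1) := hv
        _ = p ^ n * p := pow_succ p n
    have := ih (v / p) hdiv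
    calc v = v % p + p * (v / p) := (Nat.mod_add_div v p).symm
      _ = v % p + p * ∑ i ∈ Finset.range n, dig p (v / p) i * p ^ i := by rw [← this]
      _ = ∑ i ∈ Finset.range n, dig p v (i + 1) * p ^ (i + 1) + dig p v 0 * p ^ 0 := by
          rw [Finset.mul_sum, h0]
          simp only [dig_succ, pow_succ, pow_zero, mul_one]
          rw [add_comm]
          congr 1
          apply Finset.sum_congr rfl
          intro i _
          ring

lemma sum_lt_pow {p : ℕ} (hp : 2 ≤ p) (f : ℕ → ℕ) (hf : ∀ i, f i < p) :
    ∀ N, ∑ i ∈ Finset.range N, f i * p ^ i < p ^ N := by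
  intro N
  induction N with
  | zero => simp
  | succ n ih =>
    rw [Finset.sum_range_succ, pow_succ]
    have h1 : (f n + 1) * p ^ n ≤ p * p ^ n := Nat.mul_le_mul_right _ (hf n)
    have h2 : (f n + 1) * p ^ n = f n * p ^ n + p ^ n := by ring
    have h3 : p * p ^ n = p ^ n * p := mul_comm _ _
    omega

lemma sum_div {p : ℕ} (hp : 2 ≤ p) (f : ℕ → ℕ) (hf : ∀ i, f i < p) {j N : ℕ} (hj : j ≤ N) :
    (∑ i ∈ Finset.range N, f i * p ^ i) / p ^ j
      = ∑ i ∈ Finset.range (N - j), f (j + i) * p ^ i := by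
  have hsplit : ∑ i ∈ Finset.range N, f i * p ^ i
      = ∑ i ∈ Finset.range j, f i * p ^ i + ∑ i ∈ Finset.Ico j N, f i * p ^ i := by
    rw [Finset.range_eq_Ico, ← Finset.sum_Ico_consecutive _ (Nat.zero_le j) hj, Finset.range_eq_Ico]
  have hico : ∑ i ∈ Finset.Ico j N, f i * p ^ i
      = p ^ j * ∑ i ∈ Finset.range (N - j), f (j + i) * p ^ i := by
    rw [Finset.sum_Ico_eq_sum_range, Finset.mul_sum]
    apply Finset.sum_congr rfl
    intro i _
    rw [pow_add]; ring
  rw [hsplit, hico, Nat.add_mul_div_left _ _ (Nat.pow_pos (n := j) (by omega)),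
    Nat.div_eq_of_lt (sum_lt_pow hp f hf j), Nat.zero_add]

lemma dig_sum {p : ℕ} (hp : 2 ≤ p) (f : ℕ → ℕ) (hf : ∀ i, f i < p) (N j : ℕ) :
    dig p (∑ i ∈ Finset.range N, f i * p ^ i) j = if j < N then f j else 0 := by
  unfold dig
  by_cases hj : j < N
  · rw [sum_div hp f hf (le_of_lt hj), if_pos hj]
    obtain ⟨K, hK⟩ : ∃ K, N - j = K + 1 := ⟨N - j - 1, by omega⟩
    rw [hK, Finset.sum_range_succ']
    simp only [pow_zero, mul_one, Nat.add_zero]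
    have : ∑ i ∈ Finset.range K, f (j + (i + 1)) * p ^ (i + 1)
        = p * ∑ i ∈ Finset.range K, f (j + (i + 1)) * p ^ i := by
      rw [Finset.mul_sum]; apply Finset.sum_congr rfl; intro i _; rw [pow_succ]; ring
    rw [this, Nat.add_comm, Nat.add_mul_mod_self_left, Nat.mod_eq_of_lt (hf j)]
  · rw [if_neg hj]
    have : ∑ i ∈ Finset.range N, f i * p ^ i < p ^ j :=
      lt_of_lt_of_le (sum_lt_pow hp f hf N) (Nat.pow_le_pow_right (by omega) (by omega))
    rw [Nat.div_eq_of_lt this, Nat.zero_mod]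


/-- Digits of `v(S)`. -/
def bfun (p v : ℕ) (S : Finset ℕ) (i : ℕ) : ℕ :=
  if i ∈ S then (if i = 0 ∨ i - 1 ∉ S then p - dig p v i else p - 1 - dig p v i)
  else if i - 1 ∈ S then dig p v i + 1 else dig p v i

lemma bfun_lt {p v : ℕ} (hp2 : 2 ≤ p) {S : Finset ℕ} (h : UpAdm p v S) (i : ℕ) :
    bfun p v S i < p := by
  obtain ⟨h1, h2⟩ := h
  have hd := dig_lt hp2 v i
  unfold bfun
  by_cases hiS : i ∈ S
  · rw [if_pos hiS]
    by_cases hbot : i = 0 ∨ i - 1 ∉ S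
    · rw [if_pos hbot]
      have := h1 i hiS hbot
      omega
    · rw [if_neg hbot]; omega
  · rw [if_neg hiS]
    by_cases hpre : i - 1 ∈ S
    · rw [if_pos hpre]
      have hi0 : i ≠ 0 := by rintro rfl; exact hiS hpre
      have hne : dig p v i ≠ p - 1 := by
        intro hcon
        apply hiS
        have he : i - 1 + 1 = i := by omega
        have := h2 (i - 1) hpre (by rw [he]; exact hcon)
        rwa [he] at this
      omega
    · rw [if_neg hpre]; omega

lemma coeff_id {p v : ℕ} (S : Finset ℕ) (i : ℕ) (hd : dig p v i < p) :
    (bfun p v S i : ℤ) * (p : ℤ) ^ i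
      = (if i ∈ S then -(dig p v i : ℤ)
          else if i - 1 ∈ S then (dig p v i : ℤ) + 2
          else (dig p v i : ℤ)) * (p : ℤ) ^ i
        + ((if i ∈ S then (p : ℤ) else 0)
            - (if i ≠ 0 ∧ i - 1 ∈ S then (1 : ℤ) else 0)) * (p : ℤ) ^ i := by
  rw [← add_mul]
  congr 1
  unfold bfun
  by_cases hiS : i ∈ S
  · rw [if_pos hiS, if_pos hiS, if_pos hiS]
    by_cases hbot : i = 0 ∨ i - 1 ∉ S
    · rw [if_pos hbot]
      have hbr : ¬(i ≠ 0 ∧ i - 1 ∈ S) := by tauto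
      rw [if_neg hbr]
      omega
    · rw [if_neg hbot]
      have hbr : i ≠ 0 ∧ i - 1 ∈ S := by tauto
      rw [if_pos hbr]
      omega
  · rw [if_neg hiS, if_neg hiS, if_neg hiS]
    by_cases hpre : i - 1 ∈ S
    · rw [if_pos hpre, if_pos hpre]
      have hi0 : i ≠ 0 := by rintro rfl; exact hiS hpre
      rw [if_pos ⟨hi0, hpre⟩]
      omega
    · rw [if_neg hpre, if_neg hpre]
      have hbr : ¬(i ≠ 0 ∧ i - 1 ∈ S) := by tauto
      rw [if_neg hbr]
      omega

lemma coeff_id2 {p v : ℕ} (S : Finset ℕ) (i : ℕ) (hd : dig p v i < p) :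
    (if i ∈ S then (-1 : ℤ) else 1) * (bfun p v S i : ℤ) * (p : ℤ) ^ i
      = (dig p v i : ℤ) * (p : ℤ) ^ i
        - ((if i ∈ S then (p : ℤ) else 0)
            - (if i ≠ 0 ∧ i - 1 ∈ S then (1 : ℤ) else 0)) * (p : ℤ) ^ i := by
  rw [sub_eq_add_neg, ← neg_mul, ← add_mul]
  congr 1
  unfold bfun
  by_cases hiS : i ∈ S
  · rw [if_pos hiS, if_pos hiS, if_pos hiS]
    by_cases hbot : i = 0 ∨ i - 1 ∉ S
    · rw [if_pos hbot]
      have hbr : ¬(i ≠ 0 ∧ i - 1 ∈ S) := by tauto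
      rw [if_neg hbr]
      omega
    · rw [if_neg hbot]
      have hbr : i ≠ 0 ∧ i - 1 ∈ S := by tauto
      rw [if_pos hbr]
      omega
  · rw [if_neg hiS, if_neg hiS, if_neg hiS]
    by_cases hpre : i - 1 ∈ S
    · rw [if_pos hpre]
      have hi0 : i ≠ 0 := by rintro rfl; exact hiS hpre
      rw [if_pos ⟨hi0, hpre⟩]
      omega
    · rw [if_neg hpre]
      have hbr : ¬(i ≠ 0 ∧ i - 1 ∈ S) := by tauto
      rw [if_neg hbr]
      omega

lemma telescope {p : ℕ} (S : Finset ℕ) {N : ℕ} (hS : ∀ s ∈ S, s + 1 < N) :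
    ∑ i ∈ Finset.range N,
      ((if i ∈ S then (p : ℤ) else 0)
        - (if i ≠ 0 ∧ i - 1 ∈ S then (1 : ℤ) else 0)) * (p : ℤ) ^ i = 0 := by
  classical
  have hsplit : ∀ i, ((if i ∈ S then (p : ℤ) else 0)
        - (if i ≠ 0 ∧ i - 1 ∈ S then (1 : ℤ) else 0)) * (p : ℤ) ^ i
      = (if i ∈ S then (p : ℤ) ^ (i + 1) else 0)
        - (if i ≠ 0 ∧ i - 1 ∈ S then (p : ℤ) ^ i else 0) := by
    intro i
    rw [sub_mul]
    congr 1
    · split <;> simp [pow_succ] <;> ring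
    · split <;> simp
  rw [Finset.sum_congr rfl (fun i _ => hsplit i), Finset.sum_sub_distrib]
  have e1 : ∑ i ∈ Finset.range N, (if i ∈ S then (p : ℤ) ^ (i + 1) else 0)
      = ∑ s ∈ S, (p : ℤ) ^ (s + 1) := by
    rw [Finset.sum_ite_mem, Finset.inter_eq_right.mpr
      (fun s hs => Finset.mem_range.mpr (by have := hS s hs; omega))]
  have e2 : ∑ i ∈ Finset.range N, (if i ≠ 0 ∧ i - 1 ∈ S then (p : ℤ) ^ i else 0)
      = ∑ s ∈ S, (p : ℤ) ^ (s + 1) := by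
    rw [← Finset.sum_filter]
    have hfil : (Finset.range N).filter (fun i => i ≠ 0 ∧ i - 1 ∈ S) = S.image (· + 1) := by
      ext i
      simp only [Finset.mem_filter, Finset.mem_range, Finset.mem_image]
      constructor
      · rintro ⟨hiN, hi0, hi1⟩
        exact ⟨i - 1, hi1, by omega⟩
      · rintro ⟨s, hs, rfl⟩
        exact ⟨hS s hs, by omega, by simpa using hs⟩
    rw [hfil, Finset.sum_image (fun x _ y _ hxy => by omega)]
  rw [e1, e2, sub_self]

/-- If `S` is up-admissible for `v`, then `S` is down-admissible for `w = v(S)`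
and `w[S] = v`. -/
theorem stmt4 (p v : ℕ) (hp : p.Prime) (hv : 1 ≤ v) (S : Finset ℕ)
    (h : UpAdm p v S) :
    DownAdm p (vupN p v S) S ∧ vdownN p (vupN p v S) S = v := by
  classical
  have hp2 : 2 ≤ p := hp.two_le
  set N : ℕ := v + S.sup id + 2 with hN
  have hSN : ∀ s ∈ S, s + 1 < N := by
    intro s hs
    have : s ≤ S.sup id := Finset.le_sup (f := id) hs
    omega
  have hblt : ∀ i, bfun p v S i < p := bfun_lt hp2 h
  set W : ℕ := ∑ i ∈ Finset.range N, bfun p v S i * p ^ i with hWdef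
  have hWlt : W < p ^ N := sum_lt_pow hp2 _ hblt N
  have hWdig : ∀ j, dig p W j = if j < N then bfun p v S j else 0 :=
    fun j => dig_sum hp2 _ hblt N j
  -- Claim A : vup p v S = W
  have hTsub : Finset.range v ∪ S ∪ S.image (· + 1) ⊆ Finset.range N := by
    intro i hi
    simp only [Finset.mem_union, Finset.mem_range, Finset.mem_image] at hi
    rcases hi with (hi | hi) | ⟨s, hs, rfl⟩
    · exact Finset.mem_range.mpr (by omega)
    · exact Finset.mem_range.mpr (by have := hSN i hi; omega)
    · exact Finset.mem_range.mpr (hSN s hs)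
  have hA : vup p v S = (W : ℤ) := by
    have hext : vup p v S = ∑ i ∈ Finset.range N,
        (if i ∈ S then -(dig p v i : ℤ)
          else if i - 1 ∈ S then (dig p v i : ℤ) + 2
          else (dig p v i : ℤ)) * (p : ℤ) ^ i := by
      unfold vup
      apply Finset.sum_subset hTsub
      intro i hiN hiT
      simp only [Finset.mem_union, Finset.mem_range, Finset.mem_image, not_or, not_exists,
        not_and] at hiT
      obtain ⟨⟨hiv, hiS⟩, hIm⟩ := hiT
      have hpre : i - 1 ∉ S := by
        intro hc
        by_cases hi0 : i = 0
        · exact hiS (by rwa [hi0] at hc ⊢)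
        · exact hIm (i - 1) hc (by omega)
      rw [if_neg hiS, if_neg hpre, dig_eq_zero (lt_pow_of_le hp2 (by omega))]
      simp
    have hWsum : (W : ℤ) = ∑ i ∈ Finset.range N, (bfun p v S i : ℤ) * (p : ℤ) ^ i := by
      rw [hWdef]
      push_cast
      rfl
    rw [hext, hWsum]
    have := telescope S hSN (p := p)
    have hpt : ∀ i ∈ Finset.range N, (bfun p v S i : ℤ) * (p : ℤ) ^ i
        = (if i ∈ S then -(dig p v i : ℤ)
            else if i - 1 ∈ S then (dig p v i : ℤ) + 2
            else (dig p v i : ℤ)) * (p : ℤ) ^ i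
          + ((if i ∈ S then (p : ℤ) else 0)
              - (if i ≠ 0 ∧ i - 1 ∈ S then (1 : ℤ) else 0)) * (p : ℤ) ^ i :=
      fun i _ => coeff_id S i (dig_lt hp2 v i)
    rw [Finset.sum_congr rfl hpt, Finset.sum_add_distrib, this, add_zero]
  have hWN : vupN p v S = W := by
    unfold vupN
    rw [hA, Int.toNat_natCast]
  constructor
  · constructor
    · intro s hs hbot
      rw [hWN, hWdig s, if_pos (by have := hSN s hs; omega)]
      have hbs : bfun p v S s = p - dig p v s := by
        unfold bfun; rw [if_pos hs, if_pos hbot]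
      have := dig_lt hp2 v s
      omega
    · intro s hs hdig
      by_contra hnot
      rw [hWN, hWdig (s + 1), if_pos (hSN s hs)] at hdig
      have hbs : bfun p v S (s + 1) = dig p v (s + 1) + 1 := by
        unfold bfun; rw [if_neg hnot, if_pos (by simpa using hs)]
      omega
  · -- vdownN p W S = v
    rw [hWN]
    set M : ℕ := N + W with hM
    have hvd : vdown p W S = (v : ℤ) := by
      have hsub : Finset.range W ∪ S ⊆ Finset.range M := by
        intro i hi
        simp only [Finset.mem_union, Finset.mem_range] at hi
        rcases hi with hi | hi
        · exact Finset.mem_range.mpr (by omega)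
        · exact Finset.mem_range.mpr (by have := hSN i hi; omega)
      have hext : vdown p W S = ∑ i ∈ Finset.range M,
          (if i ∈ S then (-1 : ℤ) else 1) * (dig p W i : ℤ) * (p : ℤ) ^ i := by
        unfold vdown
        apply Finset.sum_subset hsub
        intro i hiM hiT
        simp only [Finset.mem_union, Finset.mem_range, not_or, not_lt] at hiT
        obtain ⟨hiW, hiS⟩ := hiT
        rw [dig_eq_zero (lt_pow_of_le hp2 hiW)]
        simp
      have hpt : ∀ i ∈ Finset.range M,
          (if i ∈ S then (-1 : ℤ) else 1) * (dig p W i : ℤ) * (p : ℤ) ^ i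
            = (dig p v i : ℤ) * (p : ℤ) ^ i
              - ((if i ∈ S then (p : ℤ) else 0)
                  - (if i ≠ 0 ∧ i - 1 ∈ S then (1 : ℤ) else 0)) * (p : ℤ) ^ i := by
        intro i _
        rw [hWdig i]
        by_cases hiN : i < N
        · rw [if_pos hiN]
          exact coeff_id2 S i (dig_lt hp2 v i)
        · rw [if_neg hiN]
          have hiS : i ∉ S := fun hc => hiN (by have := hSN i hc; omega)
          have hipre : ¬(i ≠ 0 ∧ i - 1 ∈ S) := by
            rintro ⟨hi0, hc⟩
            have := hSN (i - 1) hc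
            omega
          rw [if_neg hiS, if_neg hipre, dig_eq_zero (lt_pow_of_le hp2 (by omega))]
          simp [hiS]
      have hvsum : (v : ℤ) = ∑ i ∈ Finset.range M, (dig p v i : ℤ) * (p : ℤ) ^ i := by
        have := self_eq_sum_dig hp2 M v (lt_pow_of_le hp2 (by omega))
        calc (v : ℤ) = ((∑ i ∈ Finset.range M, dig p v i * p ^ i : ℕ) : ℤ) := by
              rw [← this]
          _ = ∑ i ∈ Finset.range M, (dig p v i : ℤ) * (p : ℤ) ^ i := by push_cast; rfl
      rw [hext, Finset.sum_congr rfl hpt, Finset.sum_sub_distrib, telescope S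
        (fun s hs => by have := hSN s hs; omega), sub_zero, ← hvsum]
    unfold vdownN
    rw [hvd, Int.toNat_natCast]

end SL2Tilt
end

section
/- Let S and S′ be stretches with S′ > S and d(S,S′) = 1. Then S′ is down-admissible for v and S is down-admissible for v[S′] if and only if both S and S ∪ S′ are down-admissible for v. In this case v[S′][S] = v[S ∪ S′]. -/
namespace SL2Tilt

lemma dig_eq_div (p v i : ℕ) : dig p v i = v % p ^ (i + 1) / p ^ i := by
  rw [pow_succ, Nat.mod_mul_right_div_self, dig]

lemma mod_pow_succ (p n i : ℕ) :
    n % p ^ (i + 1) = p ^ i * dig p n i + n % p ^ i := by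
  have h2 : n % (p ^ i * p) % p ^ i = n % p ^ i :=
    Nat.mod_mod_of_dvd n (dvd_mul_right _ _)
  have h3 := Nat.div_add_mod (n % (p ^ i * p)) (p ^ i)
  rw [dig_eq_div, pow_succ] at *
  omega

lemma dig_eq_of_mod_eq {p v w k i : ℕ} (h : v % p ^ k = w % p ^ k) (hi : i < k) :
    dig p v i = dig p w i := by
  have hd : p ^ (i + 1) ∣ p ^ k := pow_dvd_pow p hi
  have h1 : v % p ^ (i + 1) = w % p ^ (i + 1) := by
    rw [← Nat.mod_mod_of_dvd v hd, ← Nat.mod_mod_of_dvd w hd, h]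
  rw [dig_eq_div, dig_eq_div, h1]

lemma sum_dig (p v n : ℕ) :
    ∑ i ∈ Finset.range n, dig p v i * p ^ i = v % p ^ n := by
  induction n with
  | zero => simp [Nat.mod_one]
  | succ n ih => rw [Finset.sum_range_succ, ih, mod_pow_succ]; ring

lemma dig_eq_zero_of_le {p v i : ℕ} (hp : 2 ≤ p) (h : v ≤ i) : dig p v i = 0 := by
  unfold dig
  rw [Nat.div_eq_of_lt, Nat.zero_mod]
  calc v ≤ i := h
    _ < 2 ^ i := Nat.lt_two_pow_self (n := i)
    _ ≤ p ^ i := Nat.pow_le_pow_left hp i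

lemma vdown_eq {p : ℕ} (hp : 2 ≤ p) (v : ℕ) (T : Finset ℕ) :
    vdown p v T = (v : ℤ) - 2 * ∑ i ∈ T, (dig p v i : ℤ) * (p : ℤ) ^ i := by
  have key : ∀ i, (if i ∈ T then (-1 : ℤ) else 1) * (dig p v i : ℤ) * (p : ℤ) ^ i
      = (dig p v i : ℤ) * (p : ℤ) ^ i
        - 2 * (if i ∈ T then (dig p v i : ℤ) * (p : ℤ) ^ i else 0) := by
    intro i; split <;> ring
  rw [vdown]
  simp_rw [key]
  rw [Finset.sum_sub_distrib, ← Finset.mul_sum, Finset.sum_ite_mem,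
    Finset.union_inter_cancel_right]
  congr 2
  have hsub : ∑ i ∈ Finset.range v ∪ T, (dig p v i : ℤ) * (p:ℤ)^i
      = ∑ i ∈ Finset.range v, (dig p v i : ℤ) * (p:ℤ)^i :=
    (Finset.sum_subset Finset.subset_union_left (fun i _ hi => by
      rw [dig_eq_zero_of_le hp (by simpa using hi)]; simp)).symm
  rw [hsub]
  have hvlt : v < p ^ v := lt_of_lt_of_le (Nat.lt_two_pow_self (n := v)) (Nat.pow_le_pow_left hp v)
  have hs : ∑ i ∈ Finset.range v, dig p v i * p ^ i = v := by
    rw [sum_dig, Nat.mod_eq_of_lt hvlt]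
  calc ∑ i ∈ Finset.range v, (dig p v i : ℤ) * (p:ℤ)^i
      = ((∑ i ∈ Finset.range v, dig p v i * p ^ i : ℕ) : ℤ) := by push_cast; ring
    _ = (v : ℤ) := by rw [hs]

lemma vdown_pos {p v : ℕ} (hp : 2 ≤ p) {S' : Finset ℕ} (hne : S'.Nonempty)
    (hadm : DownAdm p v S') : 0 < vdown p v S' := by
  set M := S'.max' hne with hM
  have hdig : dig p v (M + 1) ≠ 0 := by
    intro h
    have h1 := hadm.2 M (S'.max'_mem hne) h
    have h2 := S'.le_max' _ h1
    omega
  have hple : p ^ (M + 1) ≤ v := by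
    by_contra h
    exact hdig (by unfold dig; rw [Nat.div_eq_of_lt (by omega), Nat.zero_mod])
  have hppos : 0 < p ^ (M + 1) := Nat.pow_pos (by omega)
  have hA : ∑ i ∈ S', dig p v i * p ^ i ≤ v % p ^ (M + 1) := by
    rw [← sum_dig]
    exact Finset.sum_le_sum_of_subset (fun i hi =>
      Finset.mem_range.mpr (Nat.lt_succ_of_le (S'.le_max' i hi)))
  have hAlt : ∑ i ∈ S', dig p v i * p ^ i < p ^ (M + 1) :=
    lt_of_le_of_lt hA (Nat.mod_lt _ hppos)
  have hge : p ^ (M + 1) + v % p ^ (M + 1) ≤ v := by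
    have h3 := Nat.div_add_mod v (p ^ (M + 1))
    have h1 : 1 ≤ v / p ^ (M + 1) := by
      rw [Nat.one_le_div_iff hppos]; exact hple
    have h2 : p ^ (M + 1) * 1 ≤ p ^ (M + 1) * (v / p ^ (M + 1)) :=
      Nat.mul_le_mul_left _ h1
    omega
  have hlt : 2 * (∑ i ∈ S', dig p v i * p ^ i) < v := by omega
  rw [vdown_eq hp]
  have hcast : ∑ i ∈ S', (dig p v i : ℤ) * (p : ℤ) ^ i
      = ((∑ i ∈ S', dig p v i * p ^ i : ℕ) : ℤ) := by push_cast; ring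
  rw [hcast]
  omega

lemma vdownN_cast {p v : ℕ} (hp : 2 ≤ p) {S' : Finset ℕ} (hne : S'.Nonempty)
    (hadm : DownAdm p v S') : (vdownN p v S' : ℤ) = vdown p v S' :=
  Int.toNat_of_nonneg (vdown_pos hp hne hadm).le

lemma vdownN_mod {p v : ℕ} (hp : 2 ≤ p) {S' : Finset ℕ} (hne : S'.Nonempty)
    (hadm : DownAdm p v S') {m' k : ℕ} (hmin : ∀ i ∈ S', m' ≤ i) (hk : k ≤ m') :
    vdownN p v S' % p ^ k = v % p ^ k := by
  set w := vdownN p v S' with hwdef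
  have hw : (w : ℤ) = vdown p v S' := vdownN_cast hp hne hadm
  rw [vdown_eq hp] at hw
  have hdvd : ((p : ℤ) ^ k) ∣ ∑ i ∈ S', (dig p v i : ℤ) * (p : ℤ) ^ i :=
    Finset.dvd_sum (fun i hi =>
      Dvd.dvd.mul_left (pow_dvd_pow _ (le_trans hk (hmin i hi))) _)
  have hmeq : (w : ℤ) % (p : ℤ) ^ k = (v : ℤ) % (p : ℤ) ^ k := by
    obtain ⟨c, hc⟩ := hdvd
    have : (w : ℤ) = (v : ℤ) + (p : ℤ) ^ k * (-2 * c) := by rw [hw, hc]; ring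
    rw [this, Int.add_mul_emod_self_left]
  have : ((w % p ^ k : ℕ) : ℤ) = ((v % p ^ k : ℕ) : ℤ) := by push_cast; exact hmeq
  exact_mod_cast this

lemma dig_vdownN_eq {p v : ℕ} (hp : 2 ≤ p) {S' : Finset ℕ} (hne : S'.Nonempty)
    (hadm : DownAdm p v S') {m' i : ℕ} (hmin : ∀ j ∈ S', m' ≤ j) (hi : i < m') :
    dig p (vdownN p v S') i = dig p v i :=
  dig_eq_of_mod_eq (vdownN_mod hp hne hadm hmin (le_refl m')) hi

lemma dig_vdownN_min {p v : ℕ} (hp : 2 ≤ p) {S' : Finset ℕ}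
    (hadm : DownAdm p v S') {m' : ℕ} (hm : m' ∈ S') (hmin : ∀ j ∈ S', m' ≤ j)
    (ha : dig p v m' ≠ 0) : dig p (vdownN p v S') m' ≠ 0 := by
  have hne : S'.Nonempty := ⟨m', hm⟩
  set w := vdownN p v S' with hwdef
  intro hcon
  -- split the sum
  have hsplit : (dig p v m' : ℤ) * (p:ℤ) ^ m' + ∑ i ∈ S'.erase m', (dig p v i : ℤ) * (p:ℤ) ^ i
      = ∑ i ∈ S', (dig p v i : ℤ) * (p:ℤ) ^ i :=
    Finset.add_sum_erase S' (fun i => (dig p v i : ℤ) * (p:ℤ) ^ i) hm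
  have hdvdE : ((p:ℤ) ^ (m' + 1)) ∣ ∑ i ∈ S'.erase m', (dig p v i : ℤ) * (p:ℤ) ^ i :=
    Finset.dvd_sum (fun i hi => by
      have h1 : i ≠ m' := Finset.ne_of_mem_erase hi
      have h2 : m' ≤ i := hmin i (Finset.mem_of_mem_erase hi)
      exact Dvd.dvd.mul_left (pow_dvd_pow _ (by omega)) _)
  obtain ⟨c, hc⟩ := hdvdE
  have hw : (w : ℤ) = vdown p v S' := vdownN_cast hp hne hadm
  rw [vdown_eq hp, ← hsplit, hc] at hw
  -- mod facts
  have n3 : w % p ^ m' = v % p ^ m' := vdownN_mod hp hne hadm hmin (le_refl m')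
  have n1 : w % p ^ (m' + 1) = w % p ^ m' := by
    rw [mod_pow_succ, hcon]; ring
  have n2 : v % p ^ (m' + 1) = p ^ m' * dig p v m' + v % p ^ m' := mod_pow_succ p v m'
  -- decompositions
  have dv := Nat.div_add_mod v (p ^ (m' + 1))
  have dw := Nat.div_add_mod w (p ^ (m' + 1))
  set a := dig p v m' with hadef
  set Qv := (v / p ^ (m' + 1) : ℕ) with hQv
  set Qw := (w / p ^ (m' + 1) : ℕ) with hQw
  set Rm := (v % p ^ m' : ℕ) with hRm
  have H2 : (v : ℤ) = (p:ℤ) ^ (m' + 1) * Qv + ((p:ℤ) ^ m' * a + Rm) := by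
    have h : v = p ^ (m' + 1) * Qv + (p ^ m' * a + Rm) := by omega
    exact_mod_cast h
  have H3 : (w : ℤ) = (p:ℤ) ^ (m' + 1) * Qw + Rm := by
    have h : w = p ^ (m' + 1) * Qw + Rm := by omega
    exact_mod_cast h
  have key : (p:ℤ) ^ m' * ((p:ℤ) * Qv + a)
      = (p:ℤ) ^ m' * ((p:ℤ) * Qw + 2 * a + 2 * (p:ℤ) * c) := by
    linear_combination H3 - H2 - hw
  have hq : ((p:ℤ) ^ m') ≠ 0 := by positivity
  have C := mul_left_cancel₀ hq key
  have hdvd : (p : ℤ) ∣ (a : ℤ) := ⟨Qv - Qw - 2 * c, by linear_combination -C⟩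
  have : p ∣ a := by exact_mod_cast hdvd
  have h1 : p ≤ a := Nat.le_of_dvd (Nat.pos_of_ne_zero ha) this
  have h2 : a < p := Nat.mod_lt _ (by omega)
  omega

/-- For adjacent stretches `S' > S`: `S'` is down-admissible for `v` and `S` is
down-admissible for `v[S']` iff `S` and `S ∪ S'` are down-admissible for `v`;
in this case `v[S'][S] = v[S ∪ S']`. -/
theorem stmt6 (p v : ℕ) (hp : p.Prime) (hv : 1 ≤ v) (S S' : Finset ℕ)
    (hS : IsStretch S) (hS' : IsStretch S')
    (hlt : ∀ a ∈ S, ∀ b ∈ S', a < b)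
    (hadj : ∃ a ∈ S, a + 1 ∈ S') :
    ((DownAdm p v S' ∧ DownAdm p (vdownN p v S') S) ↔
      (DownAdm p v S ∧ DownAdm p v (S ∪ S'))) ∧
    ((DownAdm p v S' ∧ DownAdm p (vdownN p v S') S) →
      vdownN p (vdownN p v S') S = vdownN p v (S ∪ S')) := by
  obtain ⟨a, haS, haS'⟩ := hadj
  have hp2 : 2 ≤ p := hp.two_le
  have hSle : ∀ b ∈ S, b ≤ a := fun b hb => by have := hlt b hb (a+1) haS'; omega
  have hS'ge : ∀ b ∈ S', a + 1 ≤ b := fun b hb => hlt a haS b hb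
  have haS'n : a ∉ S' := fun h => lt_irrefl a (hlt a haS a h)
  have ha1Sn : a + 1 ∉ S := fun h => by have := hSle _ h; omega
  have hmem' : ∀ s ∈ S', s ≠ a + 1 → s - 1 ∈ S' := fun s hs hne => by
    have h1 := hS'ge s hs
    exact hS'.2 (a+1) haS' s hs (s-1) (by omega) (by omega)
  have hdisj : Disjoint S S' := Finset.disjoint_left.mpr (fun {x} hx hx' => by
    have := hSle x hx; have := hS'ge x hx'; omega)
  have hne' : S'.Nonempty := ⟨_, haS'⟩
  constructor
  · constructor
    · rintro ⟨HA, HB⟩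
      have digS : ∀ i, i < a + 1 → dig p (vdownN p v S') i = dig p v i :=
        fun i hi => dig_vdownN_eq hp2 hne' HA hS'ge hi
      constructor
      · constructor
        · intro s hs h
          rw [← digS s (by have := hSle s hs; omega)]
          exact HB.1 s hs h
        · intro s hs h
          by_cases hsa : s = a
          · exfalso
            apply HA.1 (a+1) haS' (Or.inr (by simpa using haS'n))
            rw [← hsa]; exact h
          · have hsle : s + 1 ≤ a := by have := hSle s hs; omega
            exact HB.2 s hs (by rw [digS (s+1) (by omega)]; exact h)
      · constructor
        · intro s hs h
          rcases Finset.mem_union.mp hs with hsS | hsS'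
          · have h' : s = 0 ∨ s - 1 ∉ S := by
              rcases h with h | h
              · exact Or.inl h
              · exact Or.inr (fun hc => h (Finset.mem_union_left _ hc))
            rw [← digS s (by have := hSle s hsS; omega)]
            exact HB.1 s hsS h'
          · exfalso
            have h1 := hS'ge s hsS'
            rcases h with h | h
            · omega
            · by_cases hsa : s = a + 1
              · exact h (Finset.mem_union_left _ (by rw [hsa]; simpa using haS))
              · exact h (Finset.mem_union_right _ (hmem' s hsS' hsa))
        · intro s hs h
          rcases Finset.mem_union.mp hs with hsS | hsS'
          · by_cases hsa : s = a
            · exact Finset.mem_union_right _ (by rw [hsa]; exact haS')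
            · have hsle : s + 1 ≤ a := by have := hSle s hsS; omega
              exact Finset.mem_union_left _
                (HB.2 s hsS (by rw [digS (s+1) (by omega)]; exact h))
          · exact Finset.mem_union_right _ (HA.2 s hsS' h)
    · rintro ⟨GA, GB⟩
      have hdva : dig p v (a+1) ≠ 0 := fun h => ha1Sn (GA.2 a haS h)
      have HA : DownAdm p v S' := by
        constructor
        · intro s hs h
          have h1 := hS'ge s hs
          have hsa : s = a + 1 := by
            rcases h with h | h
            · omega
            · by_contra hne
              exact h (hmem' s hs hne)
          rw [hsa]; exact hdva
        · intro s hs h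
          have h1 := GB.2 s (Finset.mem_union_right _ hs) h
          rcases Finset.mem_union.mp h1 with h2 | h2
          · exfalso; have := hSle _ h2; have := hS'ge s hs; omega
          · exact h2
      refine ⟨HA, ?_⟩
      have digS : ∀ i, i < a + 1 → dig p (vdownN p v S') i = dig p v i :=
        fun i hi => dig_vdownN_eq hp2 hne' HA hS'ge hi
      constructor
      · intro s hs h
        rw [digS s (by have := hSle s hs; omega)]
        exact GA.1 s hs h
      · intro s hs h
        by_cases hsa : s = a
        · exfalso
          apply dig_vdownN_min hp2 HA haS' hS'ge hdva
          rw [← hsa]; exact h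
        · have hsle : s + 1 ≤ a := by have := hSle s hs; omega
          exact GA.2 s hs (by rw [← digS (s+1) (by omega)]; exact h)
  · rintro ⟨HA, HB⟩
    have digS : ∀ i, i < a + 1 → dig p (vdownN p v S') i = dig p v i :=
      fun i hi => dig_vdownN_eq hp2 hne' HA hS'ge hi
    have hw : (vdownN p v S' : ℤ) = vdown p v S' := vdownN_cast hp2 hne' HA
    have key : vdown p (vdownN p v S') S = vdown p v (S ∪ S') := by
      rw [vdown_eq hp2, vdown_eq hp2, hw, vdown_eq hp2, Finset.sum_union hdisj]
      have heq : ∑ i ∈ S, (dig p (vdownN p v S') i : ℤ) * (p:ℤ)^i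
          = ∑ i ∈ S, (dig p v i : ℤ) * (p:ℤ)^i :=
        Finset.sum_congr rfl (fun i hi => by rw [digS i (by have := hSle i hi; omega)])
      rw [heq]; ring
    show (vdown p (vdownN p v S') S).toNat = (vdown p v (S ∪ S')).toNat
    rw [key]

end SL2Tilt
end
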